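/- Let G be a finite connected simple graph and T a spanning tree of G. Then a circulation on G is uniquely determined by its values on the edges of G not belonging to T, and these values may be prescribed arbitrarily: the linear map restricting each circulation f on G to the function on ordered pairs (x, y) with {x, y} an edge of G outside T is a linear isomorphism onto the space of antisymmetric real-valued functions supported on the non-tree edges. In particular, the mesh currents associated to the edges closing the spanning tree parametrize all circulations on G. -/

import Mathlib

/-!
A circulation supported on a forest vanishes: every edge `xy` of a forest is a bridge, and
summing the divergence over the side of the bridge containing `x` shows that the flux `f x y`
across it is zero. Hence restriction to the non-tree edges is injective. Conversely, antisymmetric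
values `g` on the non-tree edges have divergence of total sum zero, and on the connected tree this
divergence is cancelled by routing each vertex's excess to a fixed root along a tree walk; adding
this tree chain to `g` gives a circulation whose restriction is `g`.
-/

open Finset

/-- The circulations on `G` form a real vector subspace of the space of 1-chains. -/
def circulationSubmodule (V : Type*) [Fintype V] (G : SimpleGraph V) :
    Submodule ℝ (V → V → ℝ) where
  carrier := {f | (∀ x y, f x y = -(f y x)) ∧ (∀ x y, ¬ G.Adj x y → f x y = 0) ∧
      (∀ x, ∑ y, f x y = 0)}
  add_mem' := by
    rintro a b ⟨ha1, ha2, ha3⟩ ⟨hb1, hb2, hb3⟩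
    refine ⟨fun x y => ?_, fun x y h => ?_, fun x => ?_⟩
    · simp only [Pi.add_apply]
      rw [ha1 x y, hb1 x y]; ring
    · simp only [Pi.add_apply]
      rw [ha2 x y h, hb2 x y h]; ring
    · simp only [Pi.add_apply]
      rw [Finset.sum_add_distrib, ha3 x, hb3 x]; ring
  zero_mem' := ⟨fun x y => by simp, fun x y _ => rfl, fun x => by simp⟩
  smul_mem' := by
    rintro c a ⟨ha1, ha2, ha3⟩
    refine ⟨fun x y => ?_, fun x y h => ?_, fun x => ?_⟩
    · simp only [Pi.smul_apply, smul_eq_mul]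
      rw [ha1 x y]; ring
    · simp only [Pi.smul_apply, smul_eq_mul]
      rw [ha2 x y h]; ring
    · simp only [Pi.smul_apply, smul_eq_mul]
      rw [← Finset.mul_sum, ha3 x]; ring

/-- The antisymmetric real-valued functions supported on the edges of `G` that are not
edges of `T` form a real vector subspace of `V → V → ℝ`. -/
def nonTreeSubmodule (V : Type*) (G T : SimpleGraph V) :
    Submodule ℝ (V → V → ℝ) where
  carrier := {g | (∀ x y, g x y = -(g y x)) ∧
      (∀ x y, ¬ (G.Adj x y ∧ ¬ T.Adj x y) → g x y = 0)}
  add_mem' := by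
    rintro a b ⟨ha1, ha2⟩ ⟨hb1, hb2⟩
    refine ⟨fun x y => ?_, fun x y h => ?_⟩
    · simp only [Pi.add_apply]
      rw [ha1 x y, hb1 x y]; ring
    · simp only [Pi.add_apply]
      rw [ha2 x y h, hb2 x y h]; ring
  zero_mem' := ⟨fun x y => by simp, fun x y _ => rfl⟩
  smul_mem' := by
    rintro c a ⟨ha1, ha2⟩
    refine ⟨fun x y => ?_, fun x y h => ?_⟩
    · simp only [Pi.smul_apply, smul_eq_mul]
      rw [ha1 x y]; ring
    · simp only [Pi.smul_apply, smul_eq_mul]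
      rw [ha2 x y h]; ring

/-- `T` is a spanning tree of `G`: a subgraph on the same vertex set,
connected and without cycles. -/
def IsSpanningTree {V : Type*} (G T : SimpleGraph V) : Prop :=
  T ≤ G ∧ T.Connected ∧ T.IsAcyclic

open SimpleGraph

section Circulation

variable {V : Type*} {f : V → V → ℝ}

theorem sum_sum_eq_zero_of_antisymm (hf : ∀ x y, f x y = -f y x) (s : Finset V) :
    ∑ a ∈ s, ∑ b ∈ s, f a b = 0 := by
  have h : ∑ a ∈ s, ∑ b ∈ s, f a b = -∑ a ∈ s, ∑ b ∈ s, f a b :=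
    calc ∑ a ∈ s, ∑ b ∈ s, f a b = ∑ b ∈ s, ∑ a ∈ s, -f b a := by
          rw [Finset.sum_comm]; simp only [← hf]
      _ = -∑ a ∈ s, ∑ b ∈ s, f a b := by simp only [sum_neg_distrib]
  linarith

variable [Fintype V]

theorem sum_sum_eq_sum_sum_compl_of_antisymm [DecidableEq V] (hf : ∀ x y, f x y = -f y x)
    (s : Finset V) : ∑ a ∈ s, ∑ b, f a b = ∑ a ∈ s, ∑ b ∈ sᶜ, f a b := by
  simp_rw [← sum_add_sum_compl s (f _)]
  rw [sum_add_distrib, sum_sum_eq_zero_of_antisymm hf, zero_add]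

variable {T : SimpleGraph V} (hf : ∀ x y, f x y = -f y x)
  (hfT : ∀ x y, ¬T.Adj x y → f x y = 0) (hdiv : ∀ x, ∑ y, f x y = 0)
include hf hfT hdiv

theorem circulation_apply_eq_zero_of_isBridge {x y : V} (hxy : T.IsBridge s(x, y)) :
    f x y = 0 := by
  classical
  set S := univ.filter fun v => (T.deleteEdges {s(x, y)}).Reachable x v
  have hx : x ∈ S := by simp [S]
  have hy : y ∉ S := by simpa [S, isBridge_iff] using hxy
  have hcut : ∀ a ∈ S, ∀ b ∈ Sᶜ, (a, b) ≠ (x, y) → f a b = 0 := by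
    intro a ha b hb hab
    refine hfT a b fun hadj => ?_
    by_cases he : s(a, b) = s(x, y)
    · rcases Sym2.eq_iff.mp he with ⟨rfl, rfl⟩ | ⟨rfl, -⟩
      · exact hab rfl
      · exact hy ha
    · have hreach : (T.deleteEdges {s(x, y)}).Reachable x b :=
        (mem_filter.mp ha).2.trans (deleteEdges_adj.mpr ⟨hadj, he⟩).reachable
      exact mem_compl.mp hb (mem_filter.mpr ⟨mem_univ b, hreach⟩)
  calc f x y = ∑ p ∈ S ×ˢ Sᶜ, f p.1 p.2 :=
        (sum_eq_single_of_mem (x, y) (by simp [hx, hy])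
          fun p hp hpxy => hcut p.1 (mem_product.mp hp).1 p.2 (mem_product.mp hp).2 hpxy).symm
    _ = ∑ a ∈ S, ∑ b, f a b := by rw [sum_product, sum_sum_eq_sum_sum_compl_of_antisymm hf]
    _ = 0 := sum_eq_zero fun a _ => hdiv a

theorem circulation_eq_zero_of_isAcyclic (hT : T.IsAcyclic) : f = 0 := by
  funext x y
  by_cases hxy : T.Adj x y
  · exact circulation_apply_eq_zero_of_isBridge hf hfT hdiv
      (isAcyclic_iff_forall_adj_isBridge.mp hT hxy)
  · exact hfT x y hxy

end Circulation

section Flow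

variable {V : Type*} [DecidableEq V]

def unitFlow (u v : V) : V → V → ℝ :=
  fun x y => (if x = u ∧ y = v then 1 else 0) - (if x = v ∧ y = u then 1 else 0)

theorem unitFlow_antisymm (u v x y : V) : unitFlow u v x y = -unitFlow u v y x := by
  simp only [unitFlow, and_comm (a := y = _)]
  ring

theorem eq_or_eq_of_unitFlow_ne_zero {u v x y : V} (h : unitFlow u v x y ≠ 0) :
    (x = u ∧ y = v) ∨ (x = v ∧ y = u) := by
  by_contra! hc
  simp only [unitFlow, if_neg (fun h' : _ ∧ _ => hc.1 h'.1 h'.2),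
    if_neg (fun h' : _ ∧ _ => hc.2 h'.1 h'.2), sub_zero] at h
  exact h rfl

variable [Fintype V]

theorem sum_unitFlow (u v x : V) :
    ∑ y, unitFlow u v x y = (if x = u then 1 else 0) - (if x = v then 1 else 0) := by
  simp only [unitFlow, sum_sub_distrib, ite_and]
  split_ifs <;> simp

end Flow

namespace SimpleGraph.Walk

variable {V : Type*} [DecidableEq V] {G : SimpleGraph V}

def flow : {u v : V} → G.Walk u v → V → V → ℝ
  | _, _, nil => 0
  | u, _, cons (v := w) _ p => unitFlow u w + p.flow

theorem flow_antisymm {u v : V} (p : G.Walk u v) (x y : V) : p.flow x y = -p.flow y x := by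
  induction p with
  | nil => simp [flow]
  | cons _ p ih => simp only [flow, Pi.add_apply, unitFlow_antisymm _ _ x y, ih]; ring

theorem adj_of_flow_ne_zero {u v : V} (p : G.Walk u v) {x y : V} (h : p.flow x y ≠ 0) :
    G.Adj x y := by
  induction p with
  | nil => simp [flow] at h
  | @cons a b _ hab p ih =>
    by_cases h₀ : unitFlow a b x y = 0
    · exact ih (by simpa [flow, h₀] using h)
    · rcases eq_or_eq_of_unitFlow_ne_zero h₀ with ⟨rfl, rfl⟩ | ⟨rfl, rfl⟩
      exacts [hab, hab.symm]

theorem sum_flow [Fintype V] {u v : V} (p : G.Walk u v) (x : V) :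
    ∑ y, p.flow x y = (if x = u then 1 else 0) - (if x = v then 1 else 0) := by
  induction p with
  | nil => simp [flow]
  | cons _ p ih => simp only [flow, Pi.add_apply, sum_add_distrib, sum_unitFlow, ih]; ring

end SimpleGraph.Walk

theorem exists_antisymm_sum_eq_of_connected {V : Type*} [Fintype V] {T : SimpleGraph V}
    (hT : T.Connected) (d : V → ℝ) (hd : ∑ x, d x = 0) :
    ∃ h : V → V → ℝ, (∀ x y, h x y = -h y x) ∧ (∀ x y, ¬T.Adj x y → h x y = 0) ∧
      ∀ x, ∑ y, h x y = d x := by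
  classical
  obtain ⟨r⟩ := hT.nonempty
  let w : ∀ v, T.Walk v r := fun v => (hT.preconnected v r).some
  refine ⟨fun x y => ∑ v, d v * (w v).flow x y, fun x y => ?_, fun x y hxy => ?_, fun x => ?_⟩
  · simp only [(w _).flow_antisymm x y, mul_neg, sum_neg_distrib]
  · refine sum_eq_zero fun v _ => ?_
    rw [not_imp_comm.mp (w v).adj_of_flow_ne_zero hxy, mul_zero]
  · calc ∑ y, ∑ v, d v * (w v).flow x y
        = ∑ v, d v * ((if x = v then 1 else 0) - (if x = r then 1 else 0)) := by
          rw [sum_comm]; simp only [← mul_sum, Walk.sum_flow]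
      _ = d x := by simp [mul_sub, sum_sub_distrib, hd]

section Restriction

variable {V : Type*} [Fintype V] (G T : SimpleGraph V) [DecidableRel G.Adj] [DecidableRel T.Adj]

def restrictNonTree : circulationSubmodule V G →ₗ[ℝ] nonTreeSubmodule V G T where
  toFun f := ⟨fun x y => if G.Adj x y ∧ ¬T.Adj x y then (f : V → V → ℝ) x y else 0,
    fun x y => by
      simp only [G.adj_comm y x, T.adj_comm y x]
      split_ifs
      exacts [f.2.1 x y, neg_zero.symm],
    fun _ _ h => if_neg h⟩
  map_add' f g := by
    ext x y
    simp only [Submodule.coe_add, Pi.add_apply]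
    split_ifs <;> simp
  map_smul' c f := by
    ext x y
    simp only [Submodule.coe_smul, Pi.smul_apply, smul_eq_mul, RingHom.id_apply]
    split_ifs <;> simp

@[simp]
theorem restrictNonTree_apply (f : circulationSubmodule V G) (x y : V) :
    (restrictNonTree G T f : V → V → ℝ) x y =
      if G.Adj x y ∧ ¬T.Adj x y then (f : V → V → ℝ) x y else 0 :=
  rfl

variable {G T}

theorem restrictNonTree_injective (hT : T.IsAcyclic) :
    Function.Injective (restrictNonTree G T) := by
  refine (injective_iff_map_eq_zero _).mpr fun ⟨f, hanti, hsupp, hdiv⟩ hf => ?_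
  have hfT : ∀ x y, ¬T.Adj x y → f x y = 0 := fun x y hxy => by
    by_cases hxy' : G.Adj x y
    · simpa [hxy, hxy'] using congr_fun₂ (congrArg Subtype.val hf) x y
    · exact hsupp x y hxy'
  exact Subtype.ext (circulation_eq_zero_of_isAcyclic hanti hfT hdiv hT)

theorem restrictNonTree_surjective (hTG : T ≤ G) (hT : T.Connected) :
    Function.Surjective (restrictNonTree G T) := by
  rintro ⟨g, hanti, hsupp⟩
  obtain ⟨h, hanti', hsupp', hdiv⟩ := exists_antisymm_sum_eq_of_connected hT
    (fun x => -∑ y, g x y) (by rw [sum_neg_distrib, sum_sum_eq_zero_of_antisymm hanti, neg_zero])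
  refine ⟨⟨g + h, fun x y => ?_, fun x y hxy => ?_, fun x => ?_⟩, ?_⟩
  · simp only [Pi.add_apply, hanti x y, hanti' x y, neg_add]
  · rw [Pi.add_apply, Pi.add_apply, hsupp x y (hxy ·.1), hsupp' x y (hxy <| hTG ·), add_zero]
  · simp only [Pi.add_apply, sum_add_distrib, hdiv, add_neg_cancel]
  · ext x y
    simp only [restrictNonTree_apply, Pi.add_apply]
    split_ifs with hxy
    · rw [hsupp' x y hxy.2, add_zero]
    · exact (hsupp x y hxy).symm

end Restriction

theorem circulation_restriction_to_nonTree_isomorphism_general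
    {V : Type*} [Fintype V]
    (G T : SimpleGraph V) [DecidableRel G.Adj] [DecidableRel T.Adj]
    (hT : IsSpanningTree G T) :
    ∃ e : circulationSubmodule V G ≃ₗ[ℝ] nonTreeSubmodule V G T,
      ∀ (f : circulationSubmodule V G) (x y : V),
        ((e f : V → V → ℝ) x y) =
          (if G.Adj x y ∧ ¬ T.Adj x y then (f : V → V → ℝ) x y else 0) := by
  obtain ⟨hTG, hTconn, hTacyc⟩ := hT
  have hbij : Function.Bijective (restrictNonTree G T) :=
    ⟨restrictNonTree_injective hTacyc, restrictNonTree_surjective hTG hTconn⟩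
  exact ⟨.ofBijective _ hbij, fun _ _ _ => rfl⟩

/-- A circulation on a connected graph `G` is uniquely determined by its (freely
prescribable) values on the edges of `G` outside a spanning tree `T`: the map restricting
a circulation to the non-tree edges is a linear isomorphism onto the space of
antisymmetric functions supported on the non-tree edges.  The mesh currents on the edges
closing the spanning tree thus parametrize all circulations. -/
theorem circulation_restriction_to_nonTree_isomorphism
    {V : Type*} [Fintype V] [DecidableEq V]
    (G T : SimpleGraph V) [DecidableRel G.Adj] [DecidableRel T.Adj]
    (hG : G.Connected) (hT : IsSpanningTree G T) :
    ∃ e : circulationSubmodule V G ≃ₗ[ℝ] nonTreeSubmodule V G T,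
      ∀ (f : circulationSubmodule V G) (x y : V),
        ((e f : V → V → ℝ) x y) =
          (if G.Adj x y ∧ ¬ T.Adj x y then (f : V → V → ℝ) x y else 0) :=
  circulation_restriction_to_nonTree_isomorphism_general G T hT
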